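/- arXiv:math/0410146 — 3 statements merged into one kernel-verified Lean document; each statement's English description precedes it below -/
import Mathlib

section
/- Assume B(R) ⊆ Ω and ‖f(x)‖ < ‖x‖ for all x ∈ B(R) \ {0}. Define N_p = {x ∈ Ω : Σ_{k=0}^{p} ‖f^k(x)‖² < (p+1)R²}. Then N_p is invariant under f: if x ∈ N_p then f(x) ∈ N_p. -/
/-!
On `B(R)` the map `f` does not increase the norm, so `B(R)` is forward invariant and norms
decrease along orbits inside it. The sum for `f x` is the sum for `x` with `‖x‖²` traded for
`‖f^[p+1] x‖²`. Since the average of the `‖f^[k] x‖²` (`k ≤ p`) is below `R²`, some `f^[k] x`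
lies in `B(R)`, and then `‖f^[p+1] x‖ ≤ ‖x‖`.
-/

open Metric Finset Function

section

variable {E : Type*} [SeminormedAddGroup E] {f : E → E} {R : ℝ}

theorem norm_apply_le_of_mem_ball (hf0 : f 0 = 0)
    (hcontr : ∀ x ∈ ball (0 : E) R \ {0}, ‖f x‖ < ‖x‖) {x : E} (hx : x ∈ ball 0 R) :
    ‖f x‖ ≤ ‖x‖ := by
  rcases eq_or_ne x 0 with rfl | hx0
  · simp [hf0]
  · exact (hcontr x ⟨hx, hx0⟩).le

theorem mapsTo_ball_of_norm_apply_lt (hf0 : f 0 = 0)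
    (hcontr : ∀ x ∈ ball (0 : E) R \ {0}, ‖f x‖ < ‖x‖) :
    Set.MapsTo f (ball 0 R) (ball 0 R) := fun _ hx =>
  mem_ball_zero_iff.2 <|
    (norm_apply_le_of_mem_ball hf0 hcontr hx).trans_lt (mem_ball_zero_iff.1 hx)

theorem antitone_norm_iterate_of_mem_ball (hf0 : f 0 = 0)
    (hcontr : ∀ x ∈ ball (0 : E) R \ {0}, ‖f x‖ < ‖x‖) {x : E} (hx : x ∈ ball 0 R) :
    Antitone fun m => ‖f^[m] x‖ :=
  antitone_nat_of_succ_le fun m => by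
    rw [iterate_succ_apply']
    exact norm_apply_le_of_mem_ball hf0 hcontr
      ((mapsTo_ball_of_norm_apply_lt hf0 hcontr).iterate m hx)

/- Either `x` itself lies in the ball, or it lies outside while every iterate after the
`k`-th stays inside. -/
theorem norm_iterate_le_of_norm_iterate_lt (hf0 : f 0 = 0)
    (hcontr : ∀ x ∈ ball (0 : E) R \ {0}, ‖f x‖ < ‖x‖) {x : E} {k m : ℕ} (hkm : k ≤ m)
    (hk : ‖f^[k] x‖ < R) : ‖f^[m] x‖ ≤ ‖x‖ := by
  by_cases hx : ‖x‖ < R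
  · exact antitone_norm_iterate_of_mem_ball hf0 hcontr (mem_ball_zero_iff.2 hx) (Nat.zero_le m)
  · have hdecr : ‖f^[m - k] (f^[k] x)‖ ≤ ‖f^[k] x‖ :=
      antitone_norm_iterate_of_mem_ball hf0 hcontr (mem_ball_zero_iff.2 hk) (Nat.zero_le (m - k))
    rw [← iterate_add_apply, Nat.sub_add_cancel hkm] at hdecr
    exact hdecr.trans (hk.trans_le (not_lt.1 hx)).le

end

theorem Finset.exists_norm_lt_of_sum_sq_lt_card_mul {ι E : Type*} [SeminormedAddGroup E]
    {s : Finset ι} {v : ι → E} {R : ℝ} (hR : 0 ≤ R)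
    (hsum : ∑ i ∈ s, ‖v i‖ ^ 2 < s.card * R ^ 2) : ∃ i ∈ s, ‖v i‖ < R := by
  rw [← nsmul_eq_mul, ← sum_const] at hsum
  obtain ⟨i, hi, hlt⟩ := exists_lt_of_sum_lt hsum
  exact ⟨i, hi, (sq_lt_sq₀ (norm_nonneg _) hR).1 hlt⟩

theorem stmt7_general {n : ℕ} {Ω : Set (EuclideanSpace ℝ (Fin n))}
    {f : EuclideanSpace ℝ (Fin n) → EuclideanSpace ℝ (Fin n)} (hmaps : Set.MapsTo f Ω Ω) (hf0 : f 0 = 0)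
    {R : ℝ} (hR : 0 < R)
    (hcontr : ∀ x ∈ Metric.ball (0 : EuclideanSpace ℝ (Fin n)) R \ {0}, ‖f x‖ < ‖x‖) (p : ℕ) :
    ∀ x ∈ {x ∈ Ω | ∑ k ∈ Finset.range (p + 1), ‖f^[k] x‖ ^ 2 < (p + 1) * R ^ 2},
      f x ∈ {x ∈ Ω | ∑ k ∈ Finset.range (p + 1), ‖f^[k] x‖ ^ 2 < (p + 1) * R ^ 2} := by
  rintro x ⟨hxΩ, hsum⟩
  refine ⟨hmaps hxΩ, ?_⟩
  obtain ⟨k, hk, hkR⟩ := exists_norm_lt_of_sum_sq_lt_card_mul (s := range (p + 1))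
    (v := fun k => f^[k] x) hR.le (by simpa using hsum)
  have hlast : ‖f^[p + 1] x‖ ^ 2 ≤ ‖x‖ ^ 2 := by
    gcongr
    exact norm_iterate_le_of_norm_iterate_lt hf0 hcontr (mem_range.1 hk).le hkR
  have hshift := sum_range_succ' (fun k => ‖f^[k] x‖ ^ 2) (p + 1)
  rw [sum_range_succ] at hshift
  simp only [iterate_succ_apply, iterate_zero_apply] at hshift hlast ⊢
  linarith

theorem stmt7 {n : ℕ} {Ω : Set (EuclideanSpace ℝ (Fin n))} (hΩ : IsOpen Ω)
    (h0 : (0 : EuclideanSpace ℝ (Fin n)) ∈ Ω)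
    {f : EuclideanSpace ℝ (Fin n) → EuclideanSpace ℝ (Fin n)} (hmaps : Set.MapsTo f Ω Ω) (hf0 : f 0 = 0)
    {R : ℝ} (hR : 0 < R) (hBR : Metric.ball (0 : EuclideanSpace ℝ (Fin n)) R ⊆ Ω)
    (hcontr : ∀ x ∈ Metric.ball (0 : EuclideanSpace ℝ (Fin n)) R \ {0}, ‖f x‖ < ‖x‖) (p : ℕ) :
    ∀ x ∈ {x ∈ Ω | ∑ k ∈ Finset.range (p + 1), ‖f^[k] x‖ ^ 2 < (p + 1) * R ^ 2},
      f x ∈ {x ∈ Ω | ∑ k ∈ Finset.range (p + 1), ‖f^[k] x‖ ^ 2 < (p + 1) * R ^ 2} :=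
  stmt7_general hmaps hf0 hR hcontr p
end

section
/- Assume B(R) ⊆ Ω and ‖f(x)‖ < ‖x‖ for all x ∈ B(R) \ {0}. Then for every p ≥ 0, N_p ⊆ M_p, where N_p = {x ∈ Ω : Σ_{k=0}^{p} ‖f^k(x)‖² < (p+1)R²} and M_p = {x ∈ Ω : f^p(x) ∈ B(R)}. -/
/-!
Inside `B(R)` the map strictly decreases the norm (and fixes `0`), so `B(R)` is forward invariant.
If the average of `‖f^k x‖²` over `k ≤ p` is below `R²`, some iterate `f^k x` with `k ≤ p` lies in
`B(R)`, and then so does `f^p x`.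
-/

open Metric Finset

theorem mapsTo_ball_zero_of_norm_lt_norm {E : Type*} [SeminormedAddGroup E] {f : E → E}
    (hf0 : f 0 = 0) {R : ℝ} (hcontr : ∀ x ∈ ball (0 : E) R \ {0}, ‖f x‖ < ‖x‖) :
    Set.MapsTo f (ball 0 R) (ball 0 R) := by
  intro x hx
  by_cases hx0 : x = 0
  · subst hx0
    rwa [hf0]
  · rw [mem_ball_zero_iff] at hx ⊢
    exact (hcontr x ⟨mem_ball_zero_iff.mpr hx, hx0⟩).trans hx

theorem exists_mem_ball_zero_of_sum_sq_norm_lt {E : Type*} [SeminormedAddGroup E] {u : ℕ → E}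
    {R : ℝ} (hR : 0 ≤ R) {p : ℕ} (hsum : ∑ k ∈ range (p + 1), ‖u k‖ ^ 2 < (p + 1) * R ^ 2) :
    ∃ k ≤ p, u k ∈ ball 0 R := by
  have hsum' : ∑ k ∈ range (p + 1), ‖u k‖ ^ 2 < ∑ _k ∈ range (p + 1), R ^ 2 := by
    simpa using hsum
  obtain ⟨k, hk, hlt⟩ := exists_lt_of_sum_lt hsum'
  exact ⟨k, Nat.lt_succ_iff.mp (mem_range.mp hk),
    mem_ball_zero_iff.mpr (lt_of_pow_lt_pow_left₀ 2 hR hlt)⟩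

theorem Set.MapsTo.iterate_mem_of_le {α : Type*} {f : α → α} {s : Set α} (hf : Set.MapsTo f s s)
    {x : α} {k p : ℕ} (hk : f^[k] x ∈ s) (hkp : k ≤ p) : f^[p] x ∈ s := by
  obtain ⟨m, rfl⟩ := Nat.exists_eq_add_of_le' hkp
  rw [Function.iterate_add_apply]
  exact hf.iterate m hk

theorem stmt10_general {n : ℕ} {Ω : Set (EuclideanSpace ℝ (Fin n))}
    {f : EuclideanSpace ℝ (Fin n) → EuclideanSpace ℝ (Fin n)} (hf0 : f 0 = 0)
    {R : ℝ} (hR : 0 < R)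
    (hcontr : ∀ x ∈ Metric.ball (0 : EuclideanSpace ℝ (Fin n)) R \ {0}, ‖f x‖ < ‖x‖) (p : ℕ) :
    {x ∈ Ω | ∑ k ∈ Finset.range (p + 1), ‖f^[k] x‖ ^ 2 < (p + 1) * R ^ 2} ⊆
      {x ∈ Ω | f^[p] x ∈ Metric.ball (0 : EuclideanSpace ℝ (Fin n)) R} := by
  rintro x ⟨hxΩ, hsum⟩
  obtain ⟨k, hkp, hk⟩ := exists_mem_ball_zero_of_sum_sq_norm_lt (u := fun k ↦ f^[k] x) hR.le hsum
  exact ⟨hxΩ, (mapsTo_ball_zero_of_norm_lt_norm hf0 hcontr).iterate_mem_of_le hk hkp⟩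

theorem stmt10 {n : ℕ} {Ω : Set (EuclideanSpace ℝ (Fin n))} (hΩ : IsOpen Ω)
    (h0 : (0 : EuclideanSpace ℝ (Fin n)) ∈ Ω)
    {f : EuclideanSpace ℝ (Fin n) → EuclideanSpace ℝ (Fin n)} (hmaps : Set.MapsTo f Ω Ω) (hf0 : f 0 = 0)
    {R : ℝ} (hR : 0 < R) (hBR : Metric.ball (0 : EuclideanSpace ℝ (Fin n)) R ⊆ Ω)
    (hcontr : ∀ x ∈ Metric.ball (0 : EuclideanSpace ℝ (Fin n)) R \ {0}, ‖f x‖ < ‖x‖) (p : ℕ) :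
    {x ∈ Ω | ∑ k ∈ Finset.range (p + 1), ‖f^[k] x‖ ^ 2 < (p + 1) * R ^ 2} ⊆
      {x ∈ Ω | f^[p] x ∈ Metric.ball (0 : EuclideanSpace ℝ (Fin n)) R} :=
  stmt10_general hf0 hR hcontr p
end

section
/- Suppose f is continuous, p̃ ≥ 1, B(R̃) ⊆ Ω, and ‖f^p(x)‖ < ‖x‖ for all p ∈ {p̃, …, 2p̃−1} and all x ∈ B(R̃) \ {0}. Then every x ∈ B(R̃) satisfies f^k(x) → 0 as k → ∞; i.e., B(R̃) is contained in the domain of attraction of 0. -/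
/-!
Splitting `k ≥ p̃` as `k = p̃ + (k - p̃)` shows by strong induction that `‖f^k x‖ ≤ ‖x‖` for every
`k ≥ p̃`, so the norm along an orbit can never again exceed a value it has reached `p̃` steps earlier.
It therefore suffices that the orbit of `g = f^p̃` comes arbitrarily close to `0`. If it stayed
outside `B(ε)`, it would stay in the compact annulus `ε ≤ ‖y‖ ≤ ‖x‖`, on which the continuous
function `‖y‖ - ‖g y‖` has a positive lower bound `η`; the norm would then drop by `η` at each
step, which is impossible.
-/

open Metric Filter Finset

section IteratedDecrease

variable {E : Type*} [SeminormedAddCommGroup E]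

theorem norm_iterate_le_of_forall_window {f : E → E} {pt : ℕ} (hpt : 1 ≤ pt) {R : ℝ}
    (hwin : ∀ p, pt ≤ p → p ≤ 2 * pt - 1 → ∀ x ∈ ball (0 : E) R, ‖f^[p] x‖ ≤ ‖x‖) :
    ∀ k, pt ≤ k → ∀ x ∈ ball (0 : E) R, ‖f^[k] x‖ ≤ ‖x‖ := by
  intro k
  induction k using Nat.strong_induction_on with
  | _ k ih =>
    intro hk x hx
    rcases le_or_gt k (2 * pt - 1) with hk2 | hk2
    · exact hwin k hk hk2 x hx
    have hprev := ih (k - pt) (by omega) (by omega) x hx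
    have hmem : f^[k - pt] x ∈ ball (0 : E) R :=
      mem_ball_zero_iff.2 (hprev.trans_lt (mem_ball_zero_iff.1 hx))
    calc ‖f^[k] x‖ = ‖f^[pt] (f^[k - pt] x)‖ := by
          rw [← Function.iterate_add_apply, Nat.add_sub_cancel' (by omega)]
      _ ≤ ‖f^[k - pt] x‖ := hwin pt le_rfl (by omega) _ hmem
      _ ≤ ‖x‖ := hprev

theorem exists_norm_iterate_lt [ProperSpace E] {g : E → E} {R : ℝ}
    (hg : ContinuousOn g (ball 0 R)) (hdecr : ∀ y ∈ ball (0 : E) R, y ≠ 0 → ‖g y‖ < ‖y‖)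
    {y : E} (hy : y ∈ ball 0 R) {ε : ℝ} (hε : 0 < ε) : ∃ m, ‖g^[m] y‖ < ε := by
  by_contra! hfar
  set K := closedBall (0 : E) ‖y‖ \ ball 0 ε
  have hKR : K ⊆ ball 0 R := fun z hz => closedBall_subset_ball (mem_ball_zero_iff.1 hy) hz.1
  have hK_ne : ∀ z ∈ K, z ≠ 0 := by
    rintro z ⟨-, hz⟩ rfl
    exact hz (mem_ball_self hε)
  obtain ⟨η, hη, hgap⟩ := ((isCompact_closedBall 0 ‖y‖).diff isOpen_ball).exists_forall_le'
    (continuous_norm.continuousOn.sub (hg.mono hKR).norm)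
    (fun z hz => sub_pos.2 (hdecr z (hKR hz) (hK_ne z hz)))
  have hdrop : ∀ m : ℕ, ‖g^[m] y‖ + m * η ≤ ‖y‖ := by
    intro m
    induction m with
    | zero => simp
    | succ m ih =>
      have hmem : g^[m] y ∈ K :=
        ⟨mem_closedBall_zero_iff.2 (by nlinarith [m.cast_nonneg (α := ℝ)]),
          by simpa using hfar m⟩
      have : η ≤ ‖g^[m] y‖ - ‖g (g^[m] y)‖ := hgap _ hmem
      rw [Function.iterate_succ_apply']
      push_cast
      linarith
  obtain ⟨m, hm⟩ := exists_nat_gt (‖y‖ / η)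
  rw [div_lt_iff₀ hη] at hm
  linarith [hdrop m, hfar m]

theorem tendsto_iterate_nhds_zero_of_exists_norm_lt {f : E → E} {pt : ℕ} {R : ℝ} (hR : 0 < R)
    (hle : ∀ k, pt ≤ k → ∀ y ∈ ball (0 : E) R, ‖f^[k] y‖ ≤ ‖y‖) {x : E}
    (hsmall : ∀ ε > 0, ∃ j, ‖f^[j] x‖ < ε) : Tendsto (fun k => f^[k] x) atTop (nhds 0) := by
  rw [NormedAddGroup.tendsto_nhds_zero]
  intro ε hε
  obtain ⟨j, hj⟩ := hsmall (min ε R) (lt_min hε hR)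
  have hmem : f^[j] x ∈ ball (0 : E) R := mem_ball_zero_iff.2 (hj.trans_le (min_le_right _ _))
  filter_upwards [eventually_ge_atTop (j + pt)] with k hk
  calc ‖f^[k] x‖ = ‖f^[k - j] (f^[j] x)‖ := by
        rw [← Function.iterate_add_apply, Nat.sub_add_cancel (by omega)]
    _ ≤ ‖f^[j] x‖ := hle _ (by omega) _ hmem
    _ < ε := hj.trans_le (min_le_left _ _)

end IteratedDecrease

theorem stmt15_general {n : ℕ} {Ω : Set (EuclideanSpace ℝ (Fin n))}
    {f : EuclideanSpace ℝ (Fin n) → EuclideanSpace ℝ (Fin n)} (hmaps : Set.MapsTo f Ω Ω) (hf0 : f 0 = 0)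
    {pt : ℕ} (hpt : 1 ≤ pt)
    {R : ℝ} (hBR : Metric.ball (0 : EuclideanSpace ℝ (Fin n)) R ⊆ Ω)
    (hcontr : ∀ p, pt ≤ p → p ≤ 2 * pt - 1 →
      ∀ x ∈ Metric.ball (0 : EuclideanSpace ℝ (Fin n)) R \ {0}, ‖f^[p] x‖ < ‖x‖) (hcont : ContinuousOn f Ω) :
    ∀ x ∈ Metric.ball (0 : EuclideanSpace ℝ (Fin n)) R,
      Tendsto (fun k => f^[k] x) atTop (nhds (0 : EuclideanSpace ℝ (Fin n))) := by
  intro x hx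
  have hwin : ∀ p, pt ≤ p → p ≤ 2 * pt - 1 →
      ∀ y ∈ ball (0 : EuclideanSpace ℝ (Fin n)) R, ‖f^[p] y‖ ≤ ‖y‖ := by
    intro p hp hp' y hy
    rcases eq_or_ne y 0 with rfl | hy0
    · rw [Function.iterate_fixed hf0]
    · exact (hcontr p hp hp' y ⟨hy, hy0⟩).le
  have hg : ContinuousOn (f^[pt]) (ball 0 R) := (hcont.iterate hmaps pt).mono hBR
  refine tendsto_iterate_nhds_zero_of_exists_norm_lt (pos_of_mem_ball hx)
    (norm_iterate_le_of_forall_window hpt hwin) fun ε hε => ?_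
  obtain ⟨m, hm⟩ :=
    exists_norm_iterate_lt hg (fun y hy hy0 => hcontr pt le_rfl (by omega) y ⟨hy, hy0⟩) hx hε
  exact ⟨pt * m, by rwa [Function.iterate_mul]⟩

theorem stmt15 {n : ℕ} {Ω : Set (EuclideanSpace ℝ (Fin n))} (hΩ : IsOpen Ω)
    (h0 : (0 : EuclideanSpace ℝ (Fin n)) ∈ Ω)
    {f : EuclideanSpace ℝ (Fin n) → EuclideanSpace ℝ (Fin n)} (hmaps : Set.MapsTo f Ω Ω) (hf0 : f 0 = 0)
    {pt : ℕ} (hpt : 1 ≤ pt)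
    {R : ℝ} (hR : 0 < R) (hBR : Metric.ball (0 : EuclideanSpace ℝ (Fin n)) R ⊆ Ω)
    (hcontr : ∀ p, pt ≤ p → p ≤ 2 * pt - 1 →
      ∀ x ∈ Metric.ball (0 : EuclideanSpace ℝ (Fin n)) R \ {0}, ‖f^[p] x‖ < ‖x‖) (hcont : ContinuousOn f Ω) :
    ∀ x ∈ Metric.ball (0 : EuclideanSpace ℝ (Fin n)) R,
      Tendsto (fun k => f^[k] x) atTop (nhds (0 : EuclideanSpace ℝ (Fin n))) :=
  stmt15_general hmaps hf0 hpt hBR hcontr hcont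
end
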